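/- There exists δ > 0 such that for all ζ₁, ζ₂ ∈ ℂ with |ζ₁| < δ and |ζ₂| < δ and all θ₁, θ₂ ∈ ℝ, there exist ζ in the open unit disc 𝔻 and θ ∈ ℝ satisfying (1/2)·max(|ζ₁−ζ₂|, |θ₁−θ₂|) ≤ max(|ζ|, |θ|) ≤ 3·max(|ζ₁−ζ₂|, |θ₁−θ₂|) and such that (τ_{ζ₁} ∘ r_{θ₁})⁻¹ ∘ (τ_{ζ₂} ∘ r_{θ₂}) = τ_ζ ∘ r_θ as maps of 𝔻; equivalently, for every ξ ∈ 𝔻, τ_{ζ₂}(e^{iθ₂}·ξ) = τ_{ζ₁}(e^{iθ₁}·τ_ζ(e^{iθ}·ξ)). -/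

import Mathlib

/-!
With `q = 1 - conj ζ₁ * ζ₂`, composing `τ_{ζ₁}` with `τ_c` for `c = τ_{-ζ₁}(ζ₂) = (ζ₂ - ζ₁) / q`
gives `τ_{ζ₂}` precomposed with the rotation by `q / conj q`, and a rotation can be moved
through a Möbius map by rotating its parameter. Hence `ζ = e^{-iθ₁} (ζ₂ - ζ₁) / q` and
`θ = θ₂ - θ₁ - 2 arg q` work. For small `ζ₁, ζ₂` the factor `q` is close to `1`, so
`‖ζ‖ ≈ ‖ζ₁ - ζ₂‖`; and `Im q = Im (conj ζ₁ (ζ₁ - ζ₂))` makes `arg q` small compared with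
`‖ζ₁ - ζ₂‖`, so `|θ|` stays within `‖ζ₁ - ζ₂‖ / 2` of `|θ₁ - θ₂|`.
-/

/-- The Möbius automorphism `τ_ζ(ξ) = (ξ + ζ)/(1 + conj(ζ) ξ)` of the unit disc. -/
noncomputable def moebius (ζ ξ : ℂ) : ℂ := (ξ + ζ) / (1 + (starRingEnd ℂ) ζ * ξ)

open Complex ComplexConjugate

lemma moebius_neg (a b : ℂ) : moebius (-a) b = (b - a) / (1 - conj a * b) := by
  simp only [moebius, map_neg, neg_mul, ← sub_eq_add_neg]

lemma moebius_div {x d : ℂ} (a : ℂ) (hd : d ≠ 0) :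
    moebius a (x / d) = (x + a * d) / (d + conj a * x) := by
  rw [moebius, div_add' _ _ _ hd, mul_div_assoc', add_div' _ _ _ hd, one_mul,
    div_div_div_cancel_right₀ hd]

lemma mul_moebius {u : ℂ} (hu : ‖u‖ = 1) (c w : ℂ) :
    u * moebius c w = moebius (u * c) (u * w) := by
  have hu' : conj u * u = 1 := by
    rw [← normSq_eq_conj_mul_self, ← Complex.sq_norm, hu]; norm_num
  rw [moebius, moebius, map_mul, mul_div_assoc', mul_add,
    show conj u * conj c * (u * w) = conj c * w by linear_combination (conj c * w) * hu']

lemma one_add_conj_mul_ne_zero {a w : ℂ} (ha : ‖a‖ < 1) (hw : ‖w‖ < 1) :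
    1 + conj a * w ≠ 0 := by
  intro h
  have : ‖conj a * w‖ = 1 := by rw [eq_neg_of_add_eq_zero_right h, norm_neg, norm_one]
  rw [norm_mul, norm_conj] at this
  nlinarith [norm_nonneg a, norm_nonneg w]

lemma one_sub_conj_mul_ne_zero {a b : ℂ} (ha : ‖a‖ < 1) (hb : ‖b‖ < 1) :
    1 - conj a * b ≠ 0 := by
  have := one_add_conj_mul_ne_zero (norm_neg a ▸ ha) hb
  rwa [map_neg, neg_mul, ← sub_eq_add_neg] at this

lemma normSq_one_add_conj_mul_sub_normSq_add (a w : ℂ) :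
    normSq (1 + conj a * w) - normSq (w + a) = (1 - normSq a) * (1 - normSq w) := by
  simp only [normSq_apply, add_re, add_im, mul_re, mul_im, one_re, one_im, conj_re, conj_im]
  ring

lemma norm_moebius_lt_one {a w : ℂ} (ha : ‖a‖ < 1) (hw : ‖w‖ < 1) : ‖moebius a w‖ < 1 := by
  have hden := one_add_conj_mul_ne_zero ha hw
  rw [moebius, norm_div, div_lt_one (norm_pos_iff.2 hden), ← sq_lt_sq₀ (norm_nonneg _)
    (norm_nonneg _), Complex.sq_norm, Complex.sq_norm]
  have h := normSq_one_add_conj_mul_sub_normSq_add a w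
  have ha' : normSq a < 1 := by rw [← Complex.sq_norm]; nlinarith [norm_nonneg a]
  have hw' : normSq w < 1 := by rw [← Complex.sq_norm]; nlinarith [norm_nonneg w]
  nlinarith

lemma moebius_moebius_moebius_neg {a b w : ℂ} (ha : ‖a‖ < 1) (hb : ‖b‖ < 1) (hw : ‖w‖ < 1) :
    moebius a (moebius (moebius (-a) b) w) =
      moebius b ((1 - conj a * b) / conj (1 - conj a * b) * w) := by
  set c := moebius (-a) b with hc_def
  have hc := norm_moebius_lt_one (norm_neg a ▸ ha) hb
  have hD := one_add_conj_mul_ne_zero hc hw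
  have hq := one_sub_conj_mul_ne_zero ha hb
  have hu : ‖(1 - conj a * b) / conj (1 - conj a * b)‖ = 1 := by
    rw [norm_div, norm_conj, div_self (norm_ne_zero_iff.2 hq)]
  have hden_left : 1 + conj c * w + conj a * (w + c) ≠ 0 := by
    have h := one_add_conj_mul_ne_zero ha (norm_moebius_lt_one hc hw)
    rw [moebius, mul_div_assoc', add_div' _ _ _ hD, one_mul] at h
    exact (div_ne_zero_iff.1 h).1
  have hden_right := one_add_conj_mul_ne_zero (w := _ * w) hb (by rwa [norm_mul, hu, one_mul])
  rw [show moebius c w = (w + c) / (1 + conj c * w) from rfl, moebius_div a hD]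
  conv_rhs => rw [moebius]
  rw [div_eq_div_iff hden_left hden_right, hc_def, moebius_neg]
  have hq_conj : 1 - a * conj b ≠ 0 := by simpa using (map_ne_zero conj).2 hq
  have hq_comm : 1 - b * conj a ≠ 0 := by rwa [mul_comm]
  simp only [map_div₀, map_sub, map_mul, conj_conj, map_one]
  field_simp
  ring

lemma exp_neg_two_arg_mul_I {z : ℂ} (hz : z ≠ 0) :
    exp (↑(-2 * arg z) * I) = conj z / z := by
  have hn : (‖z‖ : ℂ) ≠ 0 := by exact_mod_cast norm_ne_zero_iff.2 hz
  conv_rhs => rw [← norm_mul_exp_arg_mul_I z]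
  rw [map_mul, ← exp_conj, conj_ofReal, map_mul, conj_ofReal, conj_I, mul_div_mul_left _ _ hn,
    eq_div_iff (exp_ne_zero _), ← exp_add]
  congr 1
  push_cast
  ring

lemma moebius_exp_mul_I_factor {a b ξ : ℂ} (ha : ‖a‖ < 1) (hb : ‖b‖ < 1) (hξ : ‖ξ‖ < 1)
    (θ₁ θ₂ : ℝ) :
    moebius b (exp (θ₂ * I) * ξ) =
      moebius a (exp (θ₁ * I) * moebius (exp (↑(-θ₁) * I) * moebius (-a) b)
        (exp (↑(θ₂ - θ₁ - 2 * arg (1 - conj a * b)) * I) * ξ)) := by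
  set q := 1 - conj a * b with hq_def
  have hq := one_sub_conj_mul_ne_zero ha hb
  have hrot : exp (θ₁ * I) * exp (↑(θ₂ - θ₁ - 2 * arg q) * I) = conj q / q * exp (θ₂ * I) := by
    rw [← exp_neg_two_arg_mul_I hq, ← exp_add, ← exp_add]
    congr 1
    push_cast
    ring
  have hw : ‖conj q / q * (exp (θ₂ * I) * ξ)‖ < 1 := by
    rwa [norm_mul, norm_div, norm_conj, div_self (norm_ne_zero_iff.2 hq), one_mul, norm_mul,
      norm_exp_ofReal_mul_I, one_mul]
  rw [mul_moebius (norm_exp_ofReal_mul_I θ₁), ← mul_assoc, ← exp_add, ← mul_assoc, hrot,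
    ofReal_neg, neg_mul, add_neg_cancel, exp_zero, one_mul, mul_assoc,
    moebius_moebius_moebius_neg ha hb hw, ← hq_def, ← mul_assoc,
    div_mul_div_cancel₀ ((map_ne_zero _).2 hq), div_self hq, one_mul]

lemma norm_one_sub_conj_mul_sub_one (a b : ℂ) : ‖1 - conj a * b - 1‖ = ‖a‖ * ‖b‖ := by
  rw [sub_sub_cancel_left, norm_neg, norm_mul, norm_conj]

lemma im_one_sub_conj_mul (a b : ℂ) : (1 - conj a * b).im = (conj a * (a - b)).im := by
  simp only [sub_im, one_im, mul_im, conj_re, conj_im, sub_re]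
  ring

lemma abs_arg_le_of_re_nonneg {z : ℂ} (hz : 0 ≤ z.re) :
    |arg z| ≤ Real.pi / 2 * (|z.im| / ‖z‖) := by
  have h := Real.mul_abs_le_abs_sin (abs_arg_le_pi_div_two_iff.2 hz)
  rw [sin_arg, abs_div, abs_norm] at h
  rw [← div_le_iff₀' (by positivity)]
  calc |arg z| / (Real.pi / 2) = 2 / Real.pi * |arg z| := by ring
    _ ≤ _ := h

lemma abs_arg_one_sub_conj_mul_le {a b : ℂ} (ha : ‖a‖ ≤ 1 / 16) (hb : ‖b‖ ≤ 1 / 16) :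
    |arg (1 - conj a * b)| ≤ ‖a - b‖ / 4 := by
  set q := 1 - conj a * b with hq_def
  have hq : ‖q - 1‖ ≤ 1 / 2 := by
    rw [hq_def, norm_one_sub_conj_mul_sub_one]
    nlinarith [norm_nonneg a, norm_nonneg b]
  have hre : 0 ≤ q.re := by
    have h := (abs_le.1 ((abs_re_le_norm (q - 1)).trans hq)).1
    rw [sub_re, one_re] at h
    linarith
  have hnorm : 1 / 2 ≤ ‖q‖ := by
    linarith [norm_sub_norm_le 1 q, norm_sub_rev 1 q, norm_one (α := ℂ)]
  have him : |q.im| ≤ ‖a - b‖ / 16 := by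
    rw [hq_def, im_one_sub_conj_mul]
    refine (abs_im_le_norm _).trans ?_
    rw [norm_mul, norm_conj]
    nlinarith [norm_nonneg (a - b)]
  calc |arg q| ≤ Real.pi / 2 * (|q.im| / ‖q‖) := abs_arg_le_of_re_nonneg hre
    _ ≤ 4 / 2 * (‖a - b‖ / 16 / (1 / 2)) := by gcongr; exact Real.pi_le_four
    _ = ‖a - b‖ / 4 := by ring

lemma half_max_le_max_le_three_mul_max {d t s r : ℝ} (hs₁ : d / 2 ≤ s) (hs₂ : s ≤ 3 * d)
    (hr : |r - t| ≤ d / 2) : 1 / 2 * max d t ≤ max s r ∧ max s r ≤ 3 * max d t := by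
  rw [abs_le] at hr
  refine ⟨?_, max_le ?_ ?_⟩
  · rcases le_total t d with h | h
    · rw [max_eq_left h]; linarith [le_max_left s r]
    · rw [max_eq_right h]; linarith [le_max_right s r]
  · linarith [le_max_left d t]
  · linarith [le_max_left d t, le_max_right d t]

theorem stmt_14 :
    ∃ δ : ℝ, 0 < δ ∧
      ∀ ζ₁ ζ₂ : ℂ, ‖ζ₁‖ < δ → ‖ζ₂‖ < δ → ∀ θ₁ θ₂ : ℝ,
        ∃ ζ : ℂ, ∃ θ : ℝ, ‖ζ‖ < 1 ∧
          (1 / 2) * max (‖ζ₁ - ζ₂‖) |θ₁ - θ₂|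
              ≤ max (‖ζ‖) |θ| ∧
          max (‖ζ‖) |θ| ≤ 3 * max (‖ζ₁ - ζ₂‖) |θ₁ - θ₂| ∧
          ∀ ξ : ℂ, ‖ξ‖ < 1 →
            moebius ζ₂ (Complex.exp (θ₂ * Complex.I) * ξ) =
              moebius ζ₁ (Complex.exp (θ₁ * Complex.I) *
                moebius ζ (Complex.exp (θ * Complex.I) * ξ)) := by
  refine ⟨1 / 16, by norm_num, fun ζ₁ ζ₂ h₁ h₂ θ₁ θ₂ => ?_⟩
  set q := 1 - conj ζ₁ * ζ₂
  have hd : ‖ζ₁ - ζ₂‖ ≤ 1 / 8 := (norm_sub_le _ _).trans (by linarith)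
  have hq : |‖q‖ - 1| ≤ 1 / 2 := by
    refine (norm_one (α := ℂ) ▸ abs_norm_sub_norm_le q 1).trans ?_
    rw [norm_one_sub_conj_mul_sub_one]
    nlinarith [norm_nonneg ζ₁, norm_nonneg ζ₂]
  obtain ⟨hq_lower, hq_upper⟩ := abs_le.1 hq
  set ζ := exp (↑(-θ₁) * I) * moebius (-ζ₁) ζ₂
  have hζ : ‖ζ‖ = ‖ζ₁ - ζ₂‖ / ‖q‖ := by
    rw [norm_mul, norm_exp_ofReal_mul_I, one_mul, moebius_neg, norm_div, norm_sub_rev]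
  have hθ : abs (|θ₂ - θ₁ - 2 * arg q| - |θ₁ - θ₂|) ≤ ‖ζ₁ - ζ₂‖ / 2 := by
    rw [abs_sub_comm θ₁]
    refine (abs_abs_sub_abs_le_abs_sub _ _).trans ?_
    rw [sub_sub_cancel_left, abs_neg, abs_mul, abs_two]
    linarith [abs_arg_one_sub_conj_mul_le h₁.le h₂.le]
  obtain ⟨h_lower, h_upper⟩ := half_max_le_max_le_three_mul_max (s := ‖ζ‖)
    (by rw [hζ, le_div_iff₀ (by linarith)]; nlinarith [norm_nonneg (ζ₁ - ζ₂)])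
    (by rw [hζ, div_le_iff₀ (by linarith)]; nlinarith [norm_nonneg (ζ₁ - ζ₂)]) hθ
  exact ⟨ζ, _, by rw [hζ, div_lt_one (by linarith)]; linarith, h_lower, h_upper,
    fun ξ hξ => moebius_exp_mul_I_factor (by linarith) (by linarith) hξ θ₁ θ₂⟩
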